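/- arXiv:0901.2164 — 3 statements merged into one kernel-verified Lean document; each statement's English description precedes it below -/
import Mathlib

section
/- Fix a real parameter η ≥ 1 and define d_η on [0, 2 − 1/η] by d_η(r) = min{η+2, 4} − 3r if 0 ≤ r ≤ 1; d_η(r) = (2η − ηr − 1)/(η − r) if 1 ≤ r ≤ 2 − 1/η and η ≥ 2; and d_η(r) = η − 1/(2 − r) if 1 ≤ r ≤ 2 − 1/η and 1 ≤ η ≤ 2. Define d_{2×2}(r) = 4 − 3r for 0 ≤ r ≤ 1 and d_{2×2}(r) = 2 − r for 1 ≤ r ≤ 2. Then d_η(r) ≤ d_{2×2}(r) for all r ∈ [0, 2 − 1/η]; moreover the inequality is strict for all r ∈ (1, 2 − 1/η) when η ≥ 2, and strict for all r ∈ [0, 2 − 1/η] when 1 ≤ η < 2. -/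
/-!
Below `r = 1` both curves are affine with slope `-3`, and `min (η + 2) 4 ≤ 4`, strictly when
`η < 2`. Above `r = 1` the comparison is strict for every `η`: for `η ≥ 2` it clears denominators
to `0 < (r - 1)²`, and for `η < 2` it is `η < 2 ≤ t + 1/t` with `t = 2 - r`.
-/

open Set

/-- The DMT curve `d_η(r)` of the half-duplex relay network, for
`r ∈ [0, 2 - 1/η]`.  (At `r = 1` the pieces agree, so `if`-branching is
harmless.) -/
noncomputable def dEta (η r : ℝ) : ℝ :=
  if r ≤ 1 then min (η + 2) 4 - 3 * r
  else if 2 ≤ η then (2 * η - η * r - 1) / (η - r)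
  else η - 1 / (2 - r)

/-- The DMT of the `2×2` MIMO Rayleigh channel on `[0, 2]`. -/
noncomputable def dMIMO22 (r : ℝ) : ℝ :=
  if r ≤ 1 then 4 - 3 * r else 2 - r

section

variable {η r : ℝ}

lemma dEta_of_le_one (hr : r ≤ 1) : dEta η r = min (η + 2) 4 - 3 * r := by
  simp [dEta, hr]

lemma dEta_of_one_lt_of_two_le (hr : 1 < r) (hη : 2 ≤ η) :
    dEta η r = (2 * η - η * r - 1) / (η - r) := by
  simp [dEta, hr.not_ge, hη]

lemma dEta_of_one_lt_of_lt_two (hr : 1 < r) (hη : η < 2) : dEta η r = η - 1 / (2 - r) := by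
  simp [dEta, hr.not_ge, hη.not_ge]

lemma dMIMO22_of_le_one (hr : r ≤ 1) : dMIMO22 r = 4 - 3 * r := by
  simp [dMIMO22, hr]

lemma dMIMO22_of_one_lt (hr : 1 < r) : dMIMO22 r = 2 - r := by
  simp [dMIMO22, hr.not_ge]

end

lemma div_sub_lt_two_sub {η r : ℝ} (hr : r ≠ 1) (hrη : r < η) :
    (2 * η - η * r - 1) / (η - r) < 2 - r := by
  rw [div_lt_iff₀ (sub_pos.mpr hrη)]
  nlinarith [sq_pos_of_ne_zero (sub_ne_zero.mpr hr)]

lemma two_le_add_one_div {t : ℝ} (ht : 0 < t) : 2 ≤ t + 1 / t := by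
  rw [← sub_nonneg]
  have key : t + 1 / t - 2 = (t - 1) ^ 2 / t := by field_simp; ring
  rw [key]
  positivity

lemma sub_one_div_lt_two_sub {η r : ℝ} (hη : η < 2) (hr : r < 2) : η - 1 / (2 - r) < 2 - r := by
  linarith [two_le_add_one_div (sub_pos.mpr hr)]

lemma dEta_le_dMIMO22_of_le_one (η : ℝ) {r : ℝ} (hr : r ≤ 1) : dEta η r ≤ dMIMO22 r := by
  rw [dEta_of_le_one hr, dMIMO22_of_le_one hr]
  linarith [min_le_right (η + 2) 4]

lemma dEta_lt_dMIMO22_of_le_one {η r : ℝ} (hη : η < 2) (hr : r ≤ 1) : dEta η r < dMIMO22 r := by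
  rw [dEta_of_le_one hr, dMIMO22_of_le_one hr, min_eq_left (by linarith)]
  linarith

lemma dEta_lt_dMIMO22_of_one_lt (η : ℝ) {r : ℝ} (hr1 : 1 < r) (hr2 : r < 2) :
    dEta η r < dMIMO22 r := by
  rw [dMIMO22_of_one_lt hr1]
  rcases le_or_gt 2 η with hη | hη
  · rw [dEta_of_one_lt_of_two_le hr1 hη]
    exact div_sub_lt_two_sub hr1.ne' (by linarith)
  · rw [dEta_of_one_lt_of_lt_two hr1 hη]
    exact sub_one_div_lt_two_sub hη hr2

/-- For finite proximity gain `η`, the relay-network DMT is dominated by the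
`2×2` MIMO DMT, strictly on `(1, 2 - 1/η)` when `η ≥ 2` and strictly on all
of `[0, 2 - 1/η]` when `1 ≤ η < 2`. -/
theorem dEta_le_MIMO (η : ℝ) (hη : 1 ≤ η) :
    (∀ r ∈ Icc (0:ℝ) (2 - 1 / η), dEta η r ≤ dMIMO22 r) ∧
    (2 ≤ η → ∀ r ∈ Ioo (1:ℝ) (2 - 1 / η), dEta η r < dMIMO22 r) ∧
    (η < 2 → ∀ r ∈ Icc (0:ℝ) (2 - 1 / η), dEta η r < dMIMO22 r) := by
  have hlt : ∀ r ≤ 2 - 1 / η, r < 2 := fun r hr => by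
    have : 0 < 1 / η := by positivity
    linarith
  refine ⟨fun r hr => ?_, fun _ r hr => ?_, fun hη2 r hr => ?_⟩
  · rcases le_or_gt r 1 with hr1 | hr1
    · exact dEta_le_dMIMO22_of_le_one η hr1
    · exact (dEta_lt_dMIMO22_of_one_lt η hr1 (hlt r hr.2)).le
  · exact dEta_lt_dMIMO22_of_one_lt η hr.1 (hlt r hr.2.le)
  · rcases le_or_gt r 1 with hr1 | hr1
    · exact dEta_lt_dMIMO22_of_le_one hη2 hr1
    · exact dEta_lt_dMIMO22_of_one_lt η hr1 (hlt r hr.2)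
end

section
/- Let ρ > 0 be real, let h_s, h_r ∈ ℂ² with h_s ≠ 0, and let H be the 2×2 complex matrix with columns h_s and h_r. Let h_∥ = (⟨h_s, h_r⟩/‖h_s‖²)·h_s be the orthogonal projection of h_r onto the line spanned by h_s, and h_⊥ = h_r − h_∥. Then det(I + ρ·H·Hᴴ) = (1 + ρ‖h_s‖²)·(1 + ρ·(‖h_⊥‖² + ‖h_∥‖²/(1 + ρ‖h_s‖²))), where Hᴴ denotes the conjugate transpose of H and I the 2×2 identity matrix. -/
/-!
Sylvester's identity `det (1 + A B) = det (1 + B A)` replaces `H Hᴴ` by the Gram matrix `Hᴴ H` of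
the columns `h_s, h_r`, so the left side is `(1 + ρ‖h_s‖²)(1 + ρ‖h_r‖²) - ρ²|⟨h_s, h_r⟩|²`.
Pythagoras gives `‖h_r‖² = ‖h_∥‖² + ‖h_⊥‖²`, and `|⟨h_s, h_r⟩|² = ‖h_s‖² ‖h_∥‖²`; the term
`-ρ²‖h_s‖²‖h_∥‖²` is exactly what turns the gain `ρ‖h_∥‖²` into its MMSE-reduced form
`ρ‖h_∥‖² / (1 + ρ‖h_s‖²)`.
-/

open Matrix

open scoped InnerProductSpace

theorem Matrix.conjTranspose_mul_self_eq_gram {𝕜 m n : Type*} [RCLike 𝕜] [Fintype m]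
    {A : Matrix m n 𝕜} {v : n → EuclideanSpace 𝕜 m} (hA : ∀ i j, A i j = v j i) :
    Aᴴ * A = gram 𝕜 v := by
  ext i j
  simp [mul_apply, PiLp.inner_apply, hA, mul_comm]

theorem Matrix.det_one_add_smul_gram_fin_two {𝕜 E : Type*} [RCLike 𝕜]
    [SeminormedAddCommGroup E] [InnerProductSpace 𝕜 E] (c : ℝ) (u v : E) :
    det (1 + (c : 𝕜) • gram 𝕜 ![u, v]) =
      (((1 + c * ‖u‖ ^ 2) * (1 + c * ‖v‖ ^ 2) - c ^ 2 * ‖⟪u, v⟫_𝕜‖ ^ 2 : ℝ) : 𝕜) := by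
  have hconj : ⟪v, u⟫_𝕜 * ⟪u, v⟫_𝕜 = (‖⟪u, v⟫_𝕜‖ : 𝕜) ^ 2 := by
    rw [← inner_conj_symm, RCLike.conj_mul]
  rw [det_fin_two]
  simp only [add_apply, smul_apply, gram_apply, one_apply_eq, one_apply_ne Fin.zero_ne_one,
    one_apply_ne Fin.zero_ne_one.symm, cons_val_zero, cons_val_one, smul_eq_mul,
    inner_self_eq_norm_sq_to_K]
  push_cast
  linear_combination (-(c : 𝕜) ^ 2) * hconj

theorem Submodule.norm_sq_mul_norm_sq_starProjection_singleton {𝕜 E : Type*} [RCLike 𝕜]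
    [NormedAddCommGroup E] [InnerProductSpace 𝕜 E] (u v : E) :
    ‖u‖ ^ 2 * ‖(𝕜 ∙ u).starProjection v‖ ^ 2 = ‖⟪u, v⟫_𝕜‖ ^ 2 := by
  rcases eq_or_ne u 0 with rfl | hu
  · simp
  have hu' : ‖u‖ ≠ 0 := norm_ne_zero_iff.2 hu
  rw [starProjection_singleton, norm_smul, norm_div]
  simp only [norm_pow, norm_algebraMap', norm_norm]
  field_simp

theorem det_MIMO_parallel_decomposition_general (ρ : ℝ) (hρ : 0 < ρ)
    (hs hr : EuclideanSpace ℂ (Fin 2))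
    (H : Matrix (Fin 2) (Fin 2) ℂ) (hH : ∀ i, H i 0 = hs i ∧ H i 1 = hr i)
    (hpar hperp : EuclideanSpace ℂ (Fin 2))
    (hpar_def : hpar = ((inner ℂ hs hr : ℂ) / ((‖hs‖ : ℂ) ^ 2)) • hs)
    (hperp_def : hperp = hr - hpar) :
    Matrix.det (1 + (ρ : ℂ) • (H * Hᴴ)) =
      (((1 + ρ * ‖hs‖ ^ 2) *
        (1 + ρ * (‖hperp‖ ^ 2 + ‖hpar‖ ^ 2 / (1 + ρ * ‖hs‖ ^ 2))) : ℝ) : ℂ) := by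
  have hpar_eq : hpar = (ℂ ∙ hs).starProjection hr := by
    rw [hpar_def, Submodule.starProjection_singleton, RCLike.ofReal_pow,
      RCLike.ofReal_eq_complex_ofReal]
  have hperp_eq : hperp = (ℂ ∙ hs)ᗮ.starProjection hr := by
    rw [hperp_def, hpar_eq, Submodule.starProjection_orthogonal_val]
  have hpyth : ‖hr‖ ^ 2 = ‖hpar‖ ^ 2 + ‖hperp‖ ^ 2 := by
    rw [hpar_eq, hperp_eq]
    exact Submodule.norm_sq_eq_add_norm_sq_starProjection hr _
  have hinner : ‖⟪hs, hr⟫_ℂ‖ ^ 2 = ‖hs‖ ^ 2 * ‖hpar‖ ^ 2 := by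
    rw [hpar_eq, Submodule.norm_sq_mul_norm_sq_starProjection_singleton]
  have hgram : Hᴴ * H = gram ℂ ![hs, hr] :=
    conjTranspose_mul_self_eq_gram fun i j => by fin_cases j <;> simp [hH]
  have hsylvester : det (1 + (ρ : ℂ) • (H * Hᴴ)) = det (1 + (ρ : ℂ) • (Hᴴ * H)) := by
    rw [← smul_mul_assoc, det_one_add_mul_comm, mul_smul_comm]
  have hgain : 1 + ρ * ‖hs‖ ^ 2 ≠ 0 := by positivity
  -- `(ρ : ℂ)` is `Complex.ofReal ρ`, while the Gram lemma is stated with `RCLike.ofReal`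
  rw [hsylvester, hgram, ← RCLike.ofReal_eq_complex_ofReal, det_one_add_smul_gram_fin_two, hpyth,
    hinner, RCLike.ofReal_eq_complex_ofReal]
  congr 1
  field_simp
  ring

/-- Decomposition of the determinant of `I + ρ H Hᴴ` for a `2×2` complex
matrix `H` with columns `h_s` and `h_r`, into the product of the two
parallel-channel terms `1 + ρ‖h_s‖²` and
`1 + ρ(‖h_⊥‖² + ‖h_∥‖²/(1 + ρ‖h_s‖²))`, where `h_∥` is the orthogonal
projection of `h_r` onto the span of `h_s` and `h_⊥ = h_r − h_∥`. -/
theorem det_MIMO_parallel_decomposition (ρ : ℝ) (hρ : 0 < ρ)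
    (hs hr : EuclideanSpace ℂ (Fin 2)) (hs0 : hs ≠ 0)
    (H : Matrix (Fin 2) (Fin 2) ℂ) (hH : ∀ i, H i 0 = hs i ∧ H i 1 = hr i)
    (hpar hperp : EuclideanSpace ℂ (Fin 2))
    (hpar_def : hpar = ((inner ℂ hs hr : ℂ) / ((‖hs‖ : ℂ) ^ 2)) • hs)
    (hperp_def : hperp = hr - hpar) :
    Matrix.det (1 + (ρ : ℂ) • (H * Hᴴ)) =
      (((1 + ρ * ‖hs‖ ^ 2) *
        (1 + ρ * (‖hperp‖ ^ 2 + ‖hpar‖ ^ 2 / (1 + ρ * ‖hs‖ ^ 2))) : ℝ) : ℂ) :=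
  det_MIMO_parallel_decomposition_general ρ hρ hs hr H hH hpar hperp hpar_def hperp_def
end

section
/- Let X, Y, Z be mutually independent random variables, where X has the Gamma distribution with shape 2 and rate 1, and Y and Z are exponentially distributed with rate 1. Then for all real numbers α₁, α₂ with 0 ≤ α₁ < 1 and 0 ≤ α₂ < 1, lim_{ρ → ∞} log P(X ≤ ρ^{α₁−1} and Y + Z/(1 + ρX) ≤ ρ^{α₂−1}) / log ρ equals 3α₁ + 2α₂ − 4 if α₁ + α₂ ≤ 1, and equals 2α₁ + α₂ − 3 if α₁ + α₂ ≥ 1. -/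
/-!
Write `a = ρ^(α₁-1)`, `b = ρ^(α₂-1)`, so that `ρab = ρ^(α₁+α₂-1)` and `ρa ≥ 1`. Up to a null
set the event is squeezed between two boxes: on it `1 + ρX ≤ 2ρa`, which forces `Y ≤ b` and
`Z ≤ 2ρab`; conversely `a/2 < X ≤ a`, `Y ≤ b/2`, `Z ≤ ρab/4` imply it. By independence the
probability of a box is a product of three factors, each of a definite polynomial order in `ρ`:
the Gamma(2,1) density `x e^{-x}` is `≍ x` on `[0,1]`, so `P(θa < X ≤ a) ≍ a²`, and
`P(Y ≤ t) = 1 - e^{-t} ≍ min t 1`. Both boxes therefore have probability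
`≍ ρ^(2(α₁-1)) ρ^(α₂-1) ρ^min(α₁+α₂-1, 0)`, hence so does the event, and the exponent is read off
as `log P / log ρ`.
-/

open MeasureTheory Filter ProbabilityTheory Real Set Asymptotics Topology

namespace JointGainExponent

theorem tendsto_log_div_log_of_isTheta_rpow {f : ℝ → ℝ} {γ : ℝ}
    (hf : f =Θ[atTop] fun ρ => ρ ^ γ) :
    Tendsto (fun ρ => log (f ρ) / log ρ) atTop (𝓝 γ) := by
  obtain ⟨C, hC, hfC⟩ := hf.1.exists_pos
  obtain ⟨c, hc, hcf⟩ := hf.2.exists_pos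
  have hlim (K : ℝ) : Tendsto (fun ρ => γ + K / log ρ) atTop (𝓝 γ) := by
    simpa using tendsto_const_nhds.add (tendsto_const_nhds.div_atTop tendsto_log_atTop)
  have hlog : ∀ᶠ ρ in atTop, γ * log ρ - log c ≤ log (f ρ) ∧ log (f ρ) ≤ γ * log ρ + log C ∧
      0 < log ρ := by
    filter_upwards [hfC.bound, hcf.bound, eventually_gt_atTop 1] with ρ hρC hρc hρ
    have hpow : 0 < ρ ^ γ := rpow_pos_of_pos (by linarith) γ
    rw [norm_of_nonneg hpow.le, norm_eq_abs] at hρC hρc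
    have hf0 : 0 < |f ρ| := pos_of_mul_pos_right (hpow.trans_le hρc) hc.le
    rw [← log_abs (f ρ), ← log_rpow (by linarith)]
    refine ⟨?_, ?_, log_pos hρ⟩
    · rw [sub_le_iff_le_add', ← log_mul hc.ne' hf0.ne']
      exact log_le_log hpow hρc
    · rw [← log_mul hpow.ne' hC.ne', mul_comm]
      exact log_le_log hf0 hρC
  refine tendsto_of_tendsto_of_tendsto_of_le_of_le' (hlim (-log c)) (hlim (log C)) ?_ ?_
  · filter_upwards [hlog] with ρ hρ
    rw [le_div_iff₀ hρ.2.2, add_mul, div_mul_cancel₀ _ hρ.2.2.ne']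
    linarith
  · filter_upwards [hlog] with ρ hρ
    rw [div_le_iff₀ hρ.2.2, add_mul, div_mul_cancel₀ _ hρ.2.2.ne']
    linarith

theorem isTheta_of_le_of_le {α F : Type*} [Norm F] {l : Filter α} {f g u : α → ℝ} {h : α → F}
    (hf : f =Θ[l] h) (hg : g =Θ[l] h) (hf0 : 0 ≤ᶠ[l] f) (hfu : f ≤ᶠ[l] u) (hug : u ≤ᶠ[l] g) :
    u =Θ[l] h := by
  refine ⟨(IsBigO.of_bound' ?_).trans hg.1, hf.2.trans (IsBigO.of_bound' ?_)⟩ <;>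
    filter_upwards [hf0, hfu, hug] with x h0 h1 h2 <;>
    rw [norm_of_nonneg (h0.trans h1)]
  · rwa [norm_of_nonneg (h0.trans (h1.trans h2))]
  · rwa [norm_of_nonneg h0]

theorem isTheta_of_bounds {α : Type*} {l : Filter α} {f g : α → ℝ} {c₁ c₂ : ℝ} (hc₁ : 0 < c₁)
    (hg : 0 ≤ᶠ[l] g) (h : ∀ᶠ x in l, c₁ * g x ≤ f x ∧ f x ≤ c₂ * g x) : f =Θ[l] g := by
  refine ⟨IsBigO.of_bound c₂ ?_, IsBigO.of_bound c₁⁻¹ ?_⟩ <;>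
    filter_upwards [hg, h] with x hgx ⟨hlow, hupp⟩
  · have : 0 ≤ f x := (mul_nonneg hc₁.le hgx).trans hlow
    rwa [norm_of_nonneg hgx, norm_of_nonneg this]
  · have : 0 ≤ f x := (mul_nonneg hc₁.le hgx).trans hlow
    rw [norm_of_nonneg hgx, norm_of_nonneg this, inv_mul_eq_div, le_div_iff₀ hc₁, mul_comm]
    exact hlow

theorem exp_neg_one_mul_min_le_one_sub_exp_neg {t : ℝ} (ht : 0 ≤ t) :
    exp (-1) * min t 1 ≤ 1 - exp (-t) := by
  rcases le_total t 1 with ht1 | ht1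
  -- `1 - e^{-t} = e^{-t} (e^t - 1) ≥ e^{-1} t`
  · have hmono : exp (-1) ≤ exp (-t) := exp_le_exp.mpr (by linarith)
    have hinv : exp (-t) * exp t = 1 := by rw [← exp_add, neg_add_cancel, exp_zero]
    rw [min_eq_left ht1]
    nlinarith [add_one_le_exp t, exp_pos (-t)]
  -- `1 - e^{-t} ≥ 1 - e^{-1} ≥ e^{-1}` since `e ≥ 2`
  · have he : 2 ≤ exp 1 := by linarith [add_one_le_exp (1 : ℝ)]
    have hinv : exp (-1) * exp 1 = 1 := by rw [← exp_add, neg_add_cancel, exp_zero]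
    have hmono : exp (-t) ≤ exp (-1) := exp_le_exp.mpr (by linarith)
    rw [min_eq_right ht1]
    nlinarith [exp_pos (-1)]

theorem one_sub_exp_neg_nonneg {t : ℝ} (ht : 0 ≤ t) : 0 ≤ 1 - exp (-t) :=
  sub_nonneg.mpr (exp_le_one_iff.mpr (neg_nonpos.mpr ht))

theorem one_sub_exp_neg_le_min (t : ℝ) : 1 - exp (-t) ≤ min t 1 :=
  le_min (by linarith [add_one_le_exp (-t)]) (by linarith [exp_pos (-t)])

theorem min_mul_one_bounds {k x : ℝ} (hk : 0 < k) (hx : 0 ≤ x) :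
    min k 1 * min x 1 ≤ min (k * x) 1 ∧ min (k * x) 1 ≤ max k 1 * min x 1 := by
  have hx1 : 0 ≤ min x 1 := le_min hx zero_le_one
  refine ⟨le_min ?_ ?_, ?_⟩
  · exact mul_le_mul (min_le_left _ _) (min_le_left _ _) hx1 hk.le
  · exact mul_le_one₀ (min_le_right _ _) hx1 (min_le_right _ _)
  · rcases le_total x 1 with hxle | hxge
    · rw [min_eq_left hxle]
      exact (min_le_left _ _).trans (mul_le_mul_of_nonneg_right (le_max_left _ _) hx)
    · rw [min_eq_right hxge, mul_one]
      exact (min_le_right _ _).trans (le_max_right _ _)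

theorem one_sub_exp_neg_const_mul_rpow_isTheta {k β : ℝ} (hk : 0 < k) :
    (fun ρ => 1 - exp (-(k * ρ ^ β))) =Θ[atTop] fun ρ => ρ ^ min β 0 := by
  have hkρ : ∀ᶠ ρ : ℝ in atTop, 0 ≤ k * ρ ^ β := by
    filter_upwards [eventually_ge_atTop 0] with ρ hρ
    exact mul_nonneg hk.le (rpow_nonneg hρ β)
  have hexp : (fun ρ => 1 - exp (-(k * ρ ^ β))) =Θ[atTop] fun ρ => min (k * ρ ^ β) 1 := by
    refine isTheta_of_bounds (exp_pos (-1)) ?_ ?_ (c₂ := 1)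
    · filter_upwards [hkρ] with ρ h using le_min h zero_le_one
    · filter_upwards [hkρ] with ρ h
      exact ⟨exp_neg_one_mul_min_le_one_sub_exp_neg h, by simpa using one_sub_exp_neg_le_min _⟩
  refine hexp.trans (isTheta_of_bounds (lt_min hk one_pos) ?_ ?_ (c₂ := max k 1))
  · filter_upwards [eventually_ge_atTop 0] with ρ hρ
    exact rpow_nonneg hρ _
  · filter_upwards [eventually_ge_atTop 1] with ρ hρ
    rw [(monotone_rpow_of_base_ge_one hρ).map_min, rpow_zero]
    exact min_mul_one_bounds hk (rpow_nonneg (by linarith) β)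

theorem integral_mul_exp_neg_nonneg {s t : ℝ} (hs : 0 ≤ s) (hst : s ≤ t) :
    0 ≤ ∫ x in s..t, x * exp (-x) :=
  intervalIntegral.integral_nonneg hst fun _ hx => mul_nonneg (hs.trans hx.1) (exp_pos _).le

theorem integral_mul_exp_neg_bounds {s t : ℝ} (hs : 0 ≤ s) (hst : s ≤ t) (ht : t ≤ 1) :
    exp (-1) * ((t ^ 2 - s ^ 2) / 2) ≤ ∫ x in s..t, x * exp (-x) ∧
      ∫ x in s..t, x * exp (-x) ≤ (t ^ 2 - s ^ 2) / 2 := by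
  have hint {f : ℝ → ℝ} (hf : Continuous f) : IntervalIntegrable f volume s t :=
    hf.intervalIntegrable s t
  rw [← integral_id, ← intervalIntegral.integral_const_mul]
  constructor
  · refine intervalIntegral.integral_mono_on hst (hint (by fun_prop)) (hint (by fun_prop))
      fun x hx => ?_
    rw [mul_comm]
    exact mul_le_mul_of_nonneg_left (exp_le_exp.mpr (by linarith [hx.2])) (hs.trans hx.1)
  · refine intervalIntegral.integral_mono_on hst (hint (by fun_prop)) (hint (by fun_prop))
      fun x hx => ?_
    exact mul_le_of_le_one_right (hs.trans hx.1) (exp_le_one_iff.mpr (by linarith [hx.1]))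

theorem integral_mul_exp_neg_rpow_isTheta {θ β : ℝ} (hθ0 : 0 ≤ θ) (hθ1 : θ < 1) (hβ : β ≤ 0) :
    (fun ρ => ∫ x in θ * ρ ^ β..ρ ^ β, x * exp (-x)) =Θ[atTop] fun ρ => ρ ^ (2 * β) := by
  have hc : 0 < (1 - θ ^ 2) / 2 := by nlinarith
  refine isTheta_of_bounds (mul_pos (exp_pos (-1)) hc) ?_ ?_ (c₂ := (1 - θ ^ 2) / 2)
  · filter_upwards [eventually_ge_atTop 0] with ρ hρ
    exact rpow_nonneg hρ _
  · filter_upwards [eventually_ge_atTop 1] with ρ hρ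
    have ht0 : 0 ≤ ρ ^ β := rpow_nonneg (by linarith) β
    have hsq : ρ ^ (2 * β) = (ρ ^ β) ^ 2 := by
      rw [mul_comm, rpow_mul (by linarith), rpow_two]
    have := integral_mul_exp_neg_bounds (mul_nonneg hθ0 ht0)
      (mul_le_of_le_one_left ht0 hθ1.le) (rpow_le_one_of_one_le_of_nonpos hρ hβ)
    rw [hsq]
    constructor <;> nlinarith [this.1, this.2]

/-- `P(s < X ≤ a, Y ≤ b, Z ≤ c)` for independent `X ~ Gamma(2,1)` and `Y, Z ~ Exp(1)`. -/
noncomputable def boxProb (s a b c : ℝ) : ℝ :=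
  (∫ x in s..a, x * exp (-x)) * (1 - exp (-b)) * (1 - exp (-c))

theorem boxProb_nonneg {s a b c : ℝ} (hs : 0 ≤ s) (hsa : s ≤ a) (hb : 0 ≤ b) (hc : 0 ≤ c) :
    0 ≤ boxProb s a b c :=
  mul_nonneg (mul_nonneg (integral_mul_exp_neg_nonneg hs hsa) (one_sub_exp_neg_nonneg hb))
    (one_sub_exp_neg_nonneg hc)

theorem boxProb_rpow_isTheta {θ k₁ k₂ β₁ β₂ β₃ : ℝ} (hθ0 : 0 ≤ θ) (hθ1 : θ < 1) (hk₁ : 0 < k₁)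
    (hk₂ : 0 < k₂) (hβ₁ : β₁ ≤ 0) :
    (fun ρ => boxProb (θ * ρ ^ β₁) (ρ ^ β₁) (k₁ * ρ ^ β₂) (k₂ * ρ ^ β₃)) =Θ[atTop]
      fun ρ => ρ ^ (2 * β₁ + min β₂ 0 + min β₃ 0) := by
  refine (((integral_mul_exp_neg_rpow_isTheta hθ0 hθ1 hβ₁).mul
    (one_sub_exp_neg_const_mul_rpow_isTheta hk₁)).mul
    (one_sub_exp_neg_const_mul_rpow_isTheta hk₂)).trans_eventuallyEq ?_
  filter_upwards [eventually_gt_atTop 0] with ρ hρ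
  rw [rpow_add hρ, rpow_add hρ]

theorem ite_exponent_eq {α₁ α₂ : ℝ} (h : α₂ ≤ 1) :
    (if α₁ + α₂ ≤ 1 then 3 * α₁ + 2 * α₂ - 4 else 2 * α₁ + α₂ - 3) =
      2 * (α₁ - 1) + min (α₂ - 1) 0 + min (α₁ + α₂ - 1) 0 := by
  rw [min_eq_left (by linarith : α₂ - 1 ≤ 0)]
  split_ifs with hα
  · rw [min_eq_left (by linarith)]; ring
  · rw [min_eq_right (by linarith)]; ring

theorem gammaMeasure_Iic_zero (a r : ℝ) : gammaMeasure a r (Iic 0) = 0 := by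
  rw [← Iio_union_right, measure_union_null_iff]
  refine ⟨?_, withDensity_absolutelyContinuous _ _ Real.volume_singleton⟩
  rw [gammaMeasure, withDensity_apply _ measurableSet_Iio]
  exact lintegral_gammaPDF_of_nonpos le_rfl

theorem ae_pos_of_map_eq_gammaMeasure {Ω : Type*} [MeasurableSpace Ω] {μ : Measure Ω}
    {X : Ω → ℝ} (hX : Measurable X) {a r : ℝ} (hlaw : μ.map X = gammaMeasure a r) :
    ∀ᵐ ω ∂μ, 0 < X ω := by
  simp only [ae_iff, not_lt]
  change μ (X ⁻¹' Iic 0) = 0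
  rw [← Measure.map_apply hX measurableSet_Iic, hlaw, gammaMeasure_Iic_zero]

theorem gammaMeasure_two_one_Ioc {s t : ℝ} (hs : 0 ≤ s) (hst : s ≤ t) :
    gammaMeasure 2 1 (Ioc s t) = ENNReal.ofReal (∫ x in s..t, x * exp (-x)) := by
  rw [gammaMeasure, withDensity_apply _ measurableSet_Ioc, intervalIntegral.integral_of_le hst,
    ofReal_integral_eq_lintegral_ofReal]
  · refine setLIntegral_congr_fun measurableSet_Ioc fun x hx => ?_
    rw [gammaPDF_of_nonneg (hs.trans hx.1.le)]
    norm_num [Real.Gamma_two]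
  · exact (by fun_prop : Continuous fun x => x * exp (-x)).integrableOn_Ioc
  · filter_upwards [ae_restrict_mem measurableSet_Ioc] with x hx
    exact mul_nonneg (hs.trans hx.1.le) (exp_pos _).le

theorem expMeasure_one_Iic {t : ℝ} (ht : 0 ≤ t) :
    expMeasure 1 (Iic t) = ENNReal.ofReal (1 - exp (-t)) := by
  have := isProbabilityMeasure_expMeasure one_pos
  rw [← ofReal_cdf, cdf_expMeasure_eq one_pos, if_pos ht, one_mul]

theorem _root_.ProbabilityTheory.iIndepFun.measure_inter_preimage_three {Ω β : Type*}
    [MeasurableSpace Ω] [MeasurableSpace β] {μ : Measure Ω} {X Y Z : Ω → β}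
    (h : iIndepFun ![X, Y, Z] μ) {A B C : Set β} (hA : MeasurableSet A) (hB : MeasurableSet B) (hC : MeasurableSet C) :
    μ (X ⁻¹' A ∩ Y ⁻¹' B ∩ Z ⁻¹' C) = μ (X ⁻¹' A) * μ (Y ⁻¹' B) * μ (Z ⁻¹' C) := by
  have hinter : ⋂ i ∈ Finset.univ, ![X, Y, Z] i ⁻¹' ![A, B, C] i =
      X ⁻¹' A ∩ Y ⁻¹' B ∩ Z ⁻¹' C := by
    ext ω
    simp [Fin.forall_fin_succ, and_assoc]
  rw [← hinter, h.measure_inter_preimage_eq_mul Finset.univ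
    (by intro i _; fin_cases i <;> assumption), Fin.prod_univ_three]
  rfl

theorem le_and_le_two_mul_of_add_div_le {ρ a b x y z : ℝ} (hρ : 0 ≤ ρ) (hρa : 1 ≤ ρ * a)
    (hx : 0 ≤ x) (hy : 0 ≤ y) (hz : 0 ≤ z) (hxa : x ≤ a) (h : y + z / (1 + ρ * x) ≤ b) :
    y ≤ b ∧ z ≤ 2 * (ρ * a * b) := by
  have hden : 0 < 1 + ρ * x := by positivity
  have hzb : z ≤ (b - y) * (1 + ρ * x) := by
    rw [← div_le_iff₀ hden]; linarith
  have hyb : y ≤ b := by linarith [div_nonneg hz hden.le]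
  refine ⟨hyb, ?_⟩
  nlinarith [mul_le_mul_of_nonneg_left hxa hρ]

theorem add_div_le_of_bounds {ρ a b x y z : ℝ} (hρ : 0 ≤ ρ) (hρa : 0 < ρ * a) (hx : 1 / 2 * a < x)
    (hy : y ≤ 1 / 2 * b) (hz0 : 0 ≤ z) (hz : z ≤ 1 / 4 * (ρ * a * b)) :
    y + z / (1 + ρ * x) ≤ b := by
  have hden : 0 < 1 + ρ * x := by nlinarith [mul_le_mul_of_nonneg_left hx.le hρ]
  have hb : 0 ≤ b := by nlinarith
  have hzb : z / (1 + ρ * x) ≤ b / 2 := by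
    rw [div_le_iff₀ hden]; nlinarith [mul_le_mul_of_nonneg_left hx.le hρ]
  linarith

section Events

variable {Ω : Type*} [MeasurableSpace Ω] {μ : Measure Ω} {X Y Z : Ω → ℝ}

theorem measure_box_toReal (hX : Measurable X) (hY : Measurable Y) (hZ : Measurable Z)
    (hindep : iIndepFun ![X, Y, Z] μ) (hlawX : μ.map X = gammaMeasure 2 1)
    (hlawY : μ.map Y = expMeasure 1) (hlawZ : μ.map Z = expMeasure 1) {s a b c : ℝ}
    (hs : 0 ≤ s) (hsa : s ≤ a) (hb : 0 ≤ b) (hc : 0 ≤ c) :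
    (μ (X ⁻¹' Ioc s a ∩ Y ⁻¹' Iic b ∩ Z ⁻¹' Iic c)).toReal = boxProb s a b c := by
  rw [boxProb,
    hindep.measure_inter_preimage_three measurableSet_Ioc measurableSet_Iic measurableSet_Iic,
    ← Measure.map_apply hX measurableSet_Ioc, ← Measure.map_apply hY measurableSet_Iic,
    ← Measure.map_apply hZ measurableSet_Iic, hlawX, hlawY, hlawZ, gammaMeasure_two_one_Ioc hs hsa,
    expMeasure_one_Iic hb, expMeasure_one_Iic hc, ENNReal.toReal_mul, ENNReal.toReal_mul,
    ENNReal.toReal_ofReal (integral_mul_exp_neg_nonneg hs hsa),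
    ENNReal.toReal_ofReal (one_sub_exp_neg_nonneg hb),
    ENNReal.toReal_ofReal (one_sub_exp_neg_nonneg hc)]

theorem le_measure_event_toReal [IsFiniteMeasure μ] (hX : Measurable X) (hY : Measurable Y)
    (hZ : Measurable Z) (hindep : iIndepFun ![X, Y, Z] μ) (hlawX : μ.map X = gammaMeasure 2 1)
    (hlawY : μ.map Y = expMeasure 1) (hlawZ : μ.map Z = expMeasure 1) {ρ a b c : ℝ}
    (hρ : 0 < ρ) (ha : 0 < a) (hb : 0 ≤ b) (hc : ρ * a * b = c) :
    boxProb (1 / 2 * a) a (1 / 2 * b) (1 / 4 * c) ≤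
      (μ {ω | X ω ≤ a ∧ Y ω + Z ω / (1 + ρ * X ω) ≤ b}).toReal := by
  have hc0 : 0 ≤ c := hc ▸ by positivity
  rw [← measure_box_toReal hX hY hZ hindep hlawX hlawY hlawZ (by positivity) (by linarith)
    (by positivity) (by positivity)]
  refine ENNReal.toReal_mono (measure_ne_top _ _) (measure_mono_ae ?_)
  filter_upwards [ae_pos_of_map_eq_gammaMeasure hZ hlawZ] with ω hz ⟨⟨⟨hxa, hax⟩, hyb⟩, hzc⟩
  exact ⟨hax, add_div_le_of_bounds hρ.le (by positivity) hxa hyb hz.le (hc ▸ hzc)⟩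

theorem measure_event_toReal_le [IsFiniteMeasure μ] (hX : Measurable X) (hY : Measurable Y)
    (hZ : Measurable Z) (hindep : iIndepFun ![X, Y, Z] μ) (hlawX : μ.map X = gammaMeasure 2 1)
    (hlawY : μ.map Y = expMeasure 1) (hlawZ : μ.map Z = expMeasure 1) {ρ a b c : ℝ}
    (hρ : 0 ≤ ρ) (hρa : 1 ≤ ρ * a) (hb : 0 ≤ b) (hc : ρ * a * b = c) :
    (μ {ω | X ω ≤ a ∧ Y ω + Z ω / (1 + ρ * X ω) ≤ b}).toReal ≤
      boxProb 0 a b (2 * c) := by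
  have ha : 0 < a := pos_of_mul_pos_right (one_pos.trans_le hρa) hρ
  rw [← measure_box_toReal hX hY hZ hindep hlawX hlawY hlawZ le_rfl ha.le hb
    (hc ▸ by positivity)]
  refine ENNReal.toReal_mono (measure_ne_top _ _) (measure_mono_ae ?_)
  filter_upwards [ae_pos_of_map_eq_gammaMeasure hX hlawX, ae_pos_of_map_eq_gammaMeasure hY hlawY,
    ae_pos_of_map_eq_gammaMeasure hZ hlawZ] with ω hx hy hz ⟨hxa, hsum⟩
  obtain ⟨hyb, hzc⟩ := le_and_le_two_mul_of_add_div_le hρ hρa hx.le hy.le hz.le hxa hsum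
  exact ⟨⟨⟨hx, hxa⟩, hyb⟩, hc ▸ hzc⟩

end Events

end JointGainExponent

open JointGainExponent in
theorem joint_gain_exponent_general {Ω : Type*} [MeasureSpace Ω]
    [IsProbabilityMeasure (ℙ : Measure Ω)]
    (X Y Z : Ω → ℝ) (hX : Measurable X) (hY : Measurable Y) (hZ : Measurable Z)
    (hindep : iIndepFun
      ![X, Y, Z] ℙ)
    (hlawX : Measure.map X ℙ = gammaMeasure 2 1)
    (hlawY : Measure.map Y ℙ = expMeasure 1)
    (hlawZ : Measure.map Z ℙ = expMeasure 1)
    (α₁ α₂ : ℝ) (h₁0 : 0 ≤ α₁) (h₁1 : α₁ < 1) (h₂1 : α₂ < 1) :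
    Tendsto (fun ρ : ℝ =>
        Real.log (ℙ {ω | X ω ≤ ρ ^ (α₁ - 1) ∧
          Y ω + Z ω / (1 + ρ * X ω) ≤ ρ ^ (α₂ - 1)}).toReal / Real.log ρ)
      atTop
      (nhds (if α₁ + α₂ ≤ 1 then 3 * α₁ + 2 * α₂ - 4 else 2 * α₁ + α₂ - 3)) := by
  have hβ₁ : α₁ - 1 ≤ 0 := by linarith
  have hlower := boxProb_rpow_isTheta (θ := 1 / 2) (k₁ := 1 / 2) (k₂ := 1 / 4) (β₂ := α₂ - 1)
    (β₃ := α₁ + α₂ - 1) (by norm_num) (by norm_num) (by norm_num) (by norm_num) hβ₁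
  have hupper := boxProb_rpow_isTheta (θ := 0) (k₁ := 1) (k₂ := 2) (β₂ := α₂ - 1)
    (β₃ := α₁ + α₂ - 1) le_rfl one_pos one_pos two_pos hβ₁
  simp only [zero_mul, one_mul] at hupper
  have hscale : ∀ᶠ ρ : ℝ in atTop, 0 < ρ ∧ 1 ≤ ρ * ρ ^ (α₁ - 1) ∧
      ρ * ρ ^ (α₁ - 1) * ρ ^ (α₂ - 1) = ρ ^ (α₁ + α₂ - 1) := by
    filter_upwards [eventually_ge_atTop 1] with ρ hρ
    have hρ0 : 0 < ρ := by linarith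
    rw [rpow_sub_one hρ0.ne' α₁, mul_div_cancel₀ _ hρ0.ne', ← rpow_add hρ0, add_sub_assoc]
    exact ⟨hρ0, one_le_rpow hρ h₁0, rfl⟩
  rw [ite_exponent_eq h₂1.le]
  refine tendsto_log_div_log_of_isTheta_rpow (isTheta_of_le_of_le hlower hupper ?_ ?_ ?_)
  · filter_upwards [eventually_gt_atTop 0] with ρ hρ
    have ha := rpow_pos_of_pos hρ (α₁ - 1)
    exact boxProb_nonneg (by positivity) (by linarith) (by positivity) (by positivity)
  · filter_upwards [hscale] with ρ hρ
    exact le_measure_event_toReal hX hY hZ hindep hlawX hlawY hlawZ hρ.1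
      (rpow_pos_of_pos hρ.1 _) (rpow_nonneg hρ.1.le _) hρ.2.2
  · filter_upwards [hscale] with ρ hρ
    exact measure_event_toReal_le hX hY hZ hindep hlawX hlawY hlawZ hρ.1.le hρ.2.1
      (rpow_nonneg hρ.1.le _) hρ.2.2

/-- Joint high-SNR exponential order of the event
`{g₁² ≤ ρ^{α₁−1}, g₂² ≤ ρ^{α₂−1}}`, where `g₁² = X ~ Gamma(2,1)` and
`g₂² = Y + Z/(1 + ρX)` with `Y, Z ~ Exp(1)` and `X, Y, Z` mutually
independent:
the exponent is `3α₁ + 2α₂ − 4` when `α₁ + α₂ ≤ 1` and `2α₁ + α₂ − 3` when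
`α₁ + α₂ ≥ 1` (the two expressions agree when `α₁ + α₂ = 1`). -/
theorem joint_gain_exponent {Ω : Type*} [MeasureSpace Ω]
    [IsProbabilityMeasure (ℙ : Measure Ω)]
    (X Y Z : Ω → ℝ) (hX : Measurable X) (hY : Measurable Y) (hZ : Measurable Z)
    (hindep : iIndepFun
      ![X, Y, Z] ℙ)
    (hlawX : Measure.map X ℙ = gammaMeasure 2 1)
    (hlawY : Measure.map Y ℙ = expMeasure 1)
    (hlawZ : Measure.map Z ℙ = expMeasure 1)
    (α₁ α₂ : ℝ) (h₁0 : 0 ≤ α₁) (h₁1 : α₁ < 1) (h₂0 : 0 ≤ α₂) (h₂1 : α₂ < 1) :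
    Tendsto (fun ρ : ℝ =>
        Real.log (ℙ {ω | X ω ≤ ρ ^ (α₁ - 1) ∧
          Y ω + Z ω / (1 + ρ * X ω) ≤ ρ ^ (α₂ - 1)}).toReal / Real.log ρ)
      atTop
      (nhds (if α₁ + α₂ ≤ 1 then 3 * α₁ + 2 * α₂ - 4 else 2 * α₁ + α₂ - 3)) :=
  joint_gain_exponent_general X Y Z hX hY hZ hindep hlawX hlawY hlawZ α₁ α₂ h₁0 h₁1 h₂1
end
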